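/- Let f : X → ℝ be Hölder continuous admitting a unique maximizing measure μ_∞, and let V be a calibrated subaction for f. If z ∈ X satisfies R_+^∞(z) < ∞, then every point p in the support of μ_∞ is an accumulation point of the orbit (σ^n(z))_{n≥0}. -/

import Mathlib

open MeasureTheory Filter Topology Set ENNReal

noncomputable section

namespace GXY

variable {M : Type*}

/-- The shift map on the sequence space `ℕ → M`. -/
def shift (x : ℕ → M) : ℕ → M := fun n => x (n + 1)

/-- Prepending a symbol `a` to a sequence `x`. -/
def cons (a : M) (x : ℕ → M) : ℕ → M := fun n => Nat.casesOn n a x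

/-- The metric `d(x,y) = ∑ θ^n d_M(x_n, y_n)` on `ℕ → M`. -/
def D [MetricSpace M] (θ : ℝ) (x y : ℕ → M) : ℝ := ∑' n, θ ^ n * dist (x n) (y n)

/-- Hölder continuity with respect to the metric `D θ`. -/
def IsHolder [MetricSpace M] (θ : ℝ) (f : (ℕ → M) → ℝ) : Prop :=
  ∃ C > (0 : ℝ), ∃ α ∈ Set.Ioc (0 : ℝ) 1, ∀ x y, |f x - f y| ≤ C * (D θ x y) ^ α

/-- Shift-invariant Borel probability measures on `ℕ → M`. -/
def IsInvProb [MetricSpace M] [MeasurableSpace M] (μ : Measure (ℕ → M)) : Prop :=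
  IsProbabilityMeasure μ ∧ μ.map shift = μ

/-- The maximal ergodic average `β(f)`. -/
def betaF [MetricSpace M] [MeasurableSpace M] (f : (ℕ → M) → ℝ) : ℝ :=
  sSup { r | ∃ μ : Measure (ℕ → M), IsInvProb μ ∧ r = ∫ x, f x ∂μ }

/-- A maximizing measure for `f`. -/
def IsMaximizing [MetricSpace M] [MeasurableSpace M] (f : (ℕ → M) → ℝ)
    (μ : Measure (ℕ → M)) : Prop :=
  IsInvProb μ ∧ ∫ x, f x ∂μ = betaF f

/-- A calibrated subaction `V` for `f`:
`V y = max_{σ x = y} (f x + V x - β f)` for every `y`. -/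
def IsCalibrated [MetricSpace M] [MeasurableSpace M] (f V : (ℕ → M) → ℝ) : Prop :=
  Continuous V ∧
    ∀ y, IsGreatest { t | ∃ x, shift x = y ∧ t = f x + V x - betaF f } (V y)

/-- The Ruelle transfer operator `(L_g w)(x) = ∫_M e^{g(ax)} w(ax) dm(a)`. -/
def Ruelle [MetricSpace M] [MeasurableSpace M] (m : Measure M) (g w : (ℕ → M) → ℝ) :
    (ℕ → M) → ℝ :=
  fun x => ∫ a, Real.exp (g (cons a x)) * w (cons a x) ∂m

/-- `R₊ = β(f) + V ∘ σ - V - f ≥ 0`. -/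
def Rplus [MetricSpace M] [MeasurableSpace M] (f V : (ℕ → M) → ℝ) (x : ℕ → M) : ℝ :=
  betaF f + V (shift x) - V x - f x

/-- `R₊^∞(z) = ∑_{j≥0} R₊(σ^j z) ∈ [0,∞]`. -/
def RplusInf [MetricSpace M] [MeasurableSpace M] (f V : (ℕ → M) → ℝ) (z : ℕ → M) : ℝ≥0∞ :=
  ∑' j : ℕ, ENNReal.ofReal (Rplus f V (shift^[j] z))

/-- `R₋ = f + V - V ∘ σ - β(f) ≤ 0`. -/
def Rminus [MetricSpace M] [MeasurableSpace M] (f V : (ℕ → M) → ℝ) (x : ℕ → M) : ℝ :=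
  f x + V x - V (shift x) - betaF f

/-- The Birkhoff sum `R₋^k = ∑_{j<k} R₋ ∘ σ^j`. -/
def RminusBirk [MetricSpace M] [MeasurableSpace M] (f V : (ℕ → M) → ℝ) (k : ℕ)
    (z : ℕ → M) : ℝ :=
  ∑ j ∈ Finset.range k, Rminus f V (shift^[j] z)

/-- Extended-real logarithm with the convention `log 0 = -∞`. -/
def elog (t : ℝ) : EReal := if t = 0 then ⊥ else ((Real.log t : ℝ) : EReal)


/-!
Along the orbit of `z`, the Birkhoff sum `∑_{j<n} f(σʲz)` differs from `n β(f)` by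
`V(σⁿz) - V(z) - ∑_{j<n} R₊(σʲz)`, which stays bounded because `V` is continuous on a compact
space and `R₊^∞(z) < ∞`. Hence every weak-* cluster point `ν` of the empirical measures
`(n+1)⁻¹ ∑_{j≤n} δ_{σʲz}` is shift-invariant with `∫ f dν = β(f)`, so `ν = μ_∞` by uniqueness.
By the portmanteau theorem, `ν` gives no mass to an open set that the orbit eventually leaves,
so the orbit returns infinitely often to every neighbourhood of a point of `supp μ_∞`.
-/

open BoundedContinuousFunction TopologicalSpace

lemma birkhoffAverage_comp_self {α R N : Type*} [DivisionSemiring R] [AddCommMonoid N] [Module R N]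
    (f : α → α) (g : α → N) (n : ℕ) (x : α) :
    birkhoffAverage R f (g ∘ f) n x = birkhoffAverage R f g n (f x) := by
  simp only [birkhoffAverage, birkhoffSum, Function.comp_apply, ← Function.iterate_succ_apply' f,
    Function.iterate_succ_apply]

section Empirical

variable {X : Type*} [MeasurableSpace X]

-- `n + 1` orbit points rather than `n`, so that every term is a probability measure.
def empiricalMeasure (T : X → X) (z : X) (n : ℕ) : ProbabilityMeasure X :=
  ⟨((n : ℝ≥0∞) + 1)⁻¹ • ∑ j ∈ Finset.range (n + 1), Measure.dirac (T^[j] z), by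
    constructor
    simp [Measure.finsetSum_apply, ENNReal.inv_mul_cancel]⟩

lemma coe_empiricalMeasure (T : X → X) (z : X) (n : ℕ) :
    (empiricalMeasure T z n : Measure X) =
      ((n : ℝ≥0∞) + 1)⁻¹ • ∑ j ∈ Finset.range (n + 1), Measure.dirac (T^[j] z) :=
  rfl

lemma empiricalMeasure_apply_le_of_forall_notMem {T : X → X} {z : X} {s : Set X}
    (hs : MeasurableSet s) {N : ℕ} (hN : ∀ j, N ≤ j → T^[j] z ∉ s) (n : ℕ) :
    (empiricalMeasure T z n : Measure X) s ≤ ((n : ℝ≥0∞) + 1)⁻¹ * N := by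
  rw [coe_empiricalMeasure, Measure.smul_apply, Measure.finsetSum_apply, smul_eq_mul]
  gcongr
  calc ∑ j ∈ Finset.range (n + 1), Measure.dirac (T^[j] z) s
      ≤ ∑ j ∈ Finset.range N, Measure.dirac (T^[j] z) s := by
        refine Finset.sum_le_sum_of_ne_zero fun j _ hj => Finset.mem_range.2 ?_
        by_contra! hNj
        exact hj (by simp [Measure.dirac_apply' _ hs, hN j hNj])
    _ ≤ ∑ _j ∈ Finset.range N, 1 := Finset.sum_le_sum fun j _ => prob_le_one
    _ = N := by simp

lemma tendsto_empiricalMeasure_apply_of_eventually_notMem {T : X → X} {z : X} {s : Set X}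
    (hs : MeasurableSet s) (h : ∀ᶠ j in atTop, T^[j] z ∉ s) :
    Tendsto (fun n => (empiricalMeasure T z n : Measure X) s) atTop (𝓝 0) := by
  obtain ⟨N, hN⟩ := eventually_atTop.1 h
  have hinv : Tendsto (fun n : ℕ => ((n : ℝ≥0∞) + 1)⁻¹) atTop (𝓝 0) := by
    simpa [Function.comp_def] using ENNReal.tendsto_inv_nat_nhds_zero.comp (tendsto_add_atTop_nat 1)
  refine tendsto_of_tendsto_of_tendsto_of_le_of_le tendsto_const_nhds ?_ (fun _ => zero_le)
    (empiricalMeasure_apply_le_of_forall_notMem hs hN)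
  simpa using ENNReal.Tendsto.mul_const hinv (.inr (natCast_ne_top N))

lemma integral_empiricalMeasure [TopologicalSpace X] [OpensMeasurableSpace X] (T : X → X) (z : X)
    (F : X →ᵇ ℝ) (n : ℕ) :
    ∫ x, F x ∂(empiricalMeasure T z n : Measure X) = birkhoffAverage ℝ T F (n + 1) z := by
  rw [coe_empiricalMeasure, integral_smul_measure,
    integral_finsetSum_measure fun j _ => F.integrable (Measure.dirac _)]
  simp [birkhoffAverage, birkhoffSum, integral_dirac' _ _ F.continuous.stronglyMeasurable,
    ENNReal.toReal_add]

end Empirical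

section ClusterPoint

variable {X : Type*} [TopologicalSpace X] [MeasurableSpace X] {T : X → X} {z : X}
  {ν : ProbabilityMeasure X}

lemma integral_eq_of_mapClusterPt_empiricalMeasure [OpensMeasurableSpace X]
    (hν : MapClusterPt ν atTop (empiricalMeasure T z)) (F : X →ᵇ ℝ) {c : ℝ}
    (hF : Tendsto (birkhoffAverage ℝ T F · z) atTop (𝓝 c)) :
    ∫ x, F x ∂(ν : Measure X) = c := by
  obtain ⟨U, hU, hUν⟩ := mapClusterPt_iff_ultrafilter.1 hν
  refine tendsto_nhds_unique (ProbabilityMeasure.tendsto_iff_forall_integral_tendsto.1 hUν F) ?_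
  simp_rw [integral_empiricalMeasure]
  exact ((tendsto_add_atTop_iff_nat 1).2 hF).mono_left hU

lemma map_eq_of_mapClusterPt_empiricalMeasure [MetrizableSpace X] [SeparableSpace X]
    [BorelSpace X] (hT : Continuous T) (hν : MapClusterPt ν atTop (empiricalMeasure T z)) :
    (ν : Measure X).map T = ν := by
  obtain ⟨U, hU, hUν⟩ := mapClusterPt_iff_ultrafilter.1 hν
  have hmap := ProbabilityMeasure.tendsto_map_of_tendsto_of_continuous _ _ hUν hT
  suffices Tendsto (fun n => (empiricalMeasure T z n).map hT.measurable.aemeasurable) U (𝓝 ν) by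
    rw [← ProbabilityMeasure.toMeasure_map ν hT.measurable.aemeasurable,
      tendsto_nhds_unique hmap this]
  refine ProbabilityMeasure.tendsto_iff_forall_integral_tendsto.2 fun F => ?_
  have hdiff : Tendsto (fun n => birkhoffAverage ℝ T F (n + 1) (T z) -
      birkhoffAverage ℝ T F (n + 1) z) atTop (𝓝 0) :=
    (tendsto_add_atTop_iff_nat 1).2
      (tendsto_birkhoffAverage_apply_sub_birkhoffAverage' ℝ F.isBounded_range T z)
  have hlim := (ProbabilityMeasure.tendsto_iff_forall_integral_tendsto.1 hUν F).add
    (hdiff.mono_left hU)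
  rw [add_zero] at hlim
  refine hlim.congr fun n => ?_
  rw [ProbabilityMeasure.toMeasure_map,
    integral_map hT.aemeasurable F.continuous.aestronglyMeasurable, integral_empiricalMeasure]
  have hcomp : ∫ x, F (T x) ∂(empiricalMeasure T z n : Measure X) =
      birkhoffAverage ℝ T F (n + 1) (T z) := by
    rw [← birkhoffAverage_comp_self]
    exact integral_empiricalMeasure T z (F.compContinuous ⟨T, hT⟩) n
  rw [hcomp]
  ring

lemma mapClusterPt_orbit_of_mapClusterPt_empiricalMeasure [HasOuterApproxClosed X]
    [OpensMeasurableSpace X] (hν : MapClusterPt ν atTop (empiricalMeasure T z)) {p : X}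
    (hp : ∀ U : Set X, IsOpen U → p ∈ U → 0 < (ν : Measure X) U) :
    MapClusterPt p atTop (fun n => T^[n] z) := by
  obtain ⟨𝒰, h𝒰, h𝒰ν⟩ := mapClusterPt_iff_ultrafilter.1 hν
  refine mapClusterPt_iff_frequently.2 fun s hs => ?_
  obtain ⟨U, hUs, hUo, hpU⟩ := mem_nhds_iff.1 hs
  by_contra h
  have hU : ∀ᶠ n in atTop, T^[n] z ∉ U := (not_frequently.1 h).mono fun n hn hU => hn (hUs hU)
  have hle := ProbabilityMeasure.le_liminf_measure_open_of_tendsto h𝒰ν hUo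
  rw [((tendsto_empiricalMeasure_apply_of_eventually_notMem hUo.measurableSet hU).mono_left
    h𝒰).liminf_eq] at hle
  exact (hp U hUo hpU).ne' (nonpos_iff_eq_zero.1 hle)

end ClusterPoint

section Holder

variable [MetricSpace M] {θ : ℝ}

lemma D_self (x : ℕ → M) : D θ x x = 0 := by
  simp [D]

lemma continuous_D (hθ : |θ| < 1) (hdiam : ∀ a b : M, dist a b ≤ 1) (x : ℕ → M) :
    Continuous (D θ x) := by
  refine continuous_tsum
    (fun n => continuous_const.mul (continuous_const.dist (continuous_apply n)))
    (summable_geometric_of_lt_one (abs_nonneg θ) hθ) fun n y => ?_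
  rw [norm_mul, norm_pow, Real.norm_eq_abs, Real.norm_eq_abs, abs_of_nonneg dist_nonneg]
  exact mul_le_of_le_one_right (by positivity) (hdiam _ _)

lemma IsHolder.continuous (hθ : |θ| < 1) (hdiam : ∀ a b : M, dist a b ≤ 1)
    {f : (ℕ → M) → ℝ} (hf : IsHolder θ f) : Continuous f := by
  obtain ⟨C, -, α, hα, hC⟩ := hf
  refine continuous_iff_continuousAt.2 fun x => ?_
  have hD : Tendsto (fun y => C * D θ x y ^ α) (𝓝 x) (𝓝 0) := by
    have hlim := ((Real.continuousAt_rpow_const _ α (.inr hα.1.le)).tendsto.comp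
      ((continuous_D hθ hdiam x).tendsto x)).const_mul C
    simpa [Function.comp_def, D_self, Real.zero_rpow hα.1.ne'] using hlim
  refine tendsto_iff_dist_tendsto_zero.2 (squeeze_zero (fun _ => dist_nonneg) (fun y => ?_) hD)
  rw [Real.dist_eq, abs_sub_comm]
  exact hC x y

end Holder

lemma continuous_shift [TopologicalSpace M] : Continuous (shift : (ℕ → M) → ℕ → M) :=
  continuous_pi fun n => continuous_apply (n + 1)

section Calibrated

variable [MetricSpace M] [MeasurableSpace M] {f V : (ℕ → M) → ℝ}

lemma IsCalibrated.rplus_nonneg (hV : IsCalibrated f V) (x : ℕ → M) : 0 ≤ Rplus f V x := by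
  have hle := (hV.2 (shift x)).2 ⟨x, rfl, rfl⟩
  rw [Rplus]
  linarith

lemma birkhoffSum_shift_add_birkhoffSum_rplus (f V : (ℕ → M) → ℝ) (n : ℕ) (z : ℕ → M) :
    birkhoffSum shift f n z + birkhoffSum shift (Rplus f V) n z =
      n * betaF f + (V (shift^[n] z) - V z) := by
  have hstep : ∀ j, f (shift^[j] z) + Rplus f V (shift^[j] z) =
      betaF f + (V (shift^[j + 1] z) - V (shift^[j] z)) := fun j => by
    rw [Function.iterate_succ_apply', Rplus]
    ring
  rw [birkhoffSum, birkhoffSum, ← Finset.sum_add_distrib, Finset.sum_congr rfl fun j _ => hstep j,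
    Finset.sum_add_distrib, Finset.sum_range_sub fun j => V (shift^[j] z)]
  simp

lemma IsCalibrated.birkhoffSum_rplus_le (hV : IsCalibrated f V) {z : ℕ → M}
    (hz : RplusInf f V z ≠ ⊤) (n : ℕ) :
    birkhoffSum shift (Rplus f V) n z ≤ (RplusInf f V z).toReal := by
  calc birkhoffSum shift (Rplus f V) n z
      = (∑ j ∈ Finset.range n, ENNReal.ofReal (Rplus f V (shift^[j] z))).toReal := by
        rw [ENNReal.toReal_sum fun _ _ => ofReal_ne_top, birkhoffSum]
        simp [ENNReal.toReal_ofReal (hV.rplus_nonneg _)]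
    _ ≤ (RplusInf f V z).toReal := ENNReal.toReal_mono hz (ENNReal.sum_le_tsum _)

lemma IsCalibrated.tendsto_birkhoffAverage [CompactSpace M] (hV : IsCalibrated f V)
    {z : ℕ → M} (hz : RplusInf f V z ≠ ⊤) :
    Tendsto (birkhoffAverage ℝ shift f · z) atTop (𝓝 (betaF f)) := by
  obtain ⟨C, hC⟩ := (isCompact_range hV.1).isBounded.exists_norm_le
  simp only [forall_mem_range, Real.norm_eq_abs, abs_le] at hC
  set err : ℕ → ℝ := fun n => V (shift^[n] z) - V z - birkhoffSum shift (Rplus f V) n z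
  have hbdd : IsBoundedUnder (· ≤ ·) atTop (norm ∘ err) := by
    refine ⟨2 * C + (RplusInf f V z).toReal, eventually_map.2 (.of_forall fun n => ?_)⟩
    have hR_le := hV.birkhoffSum_rplus_le hz n
    have hR_nonneg : 0 ≤ birkhoffSum shift (Rplus f V) n z :=
      Finset.sum_nonneg fun j _ => hV.rplus_nonneg _
    simp only [Function.comp_apply, Real.norm_eq_abs, abs_le, err]
    constructor <;> linarith [hC (shift^[n] z), hC z]
  have hlim : Tendsto (fun n : ℕ => betaF f + (n : ℝ)⁻¹ * err n) atTop (𝓝 (betaF f)) := by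
    simpa using tendsto_const_nhds.add
      ((tendsto_inv_atTop_zero.comp tendsto_natCast_atTop_atTop).zero_mul_isBoundedUnder_le hbdd)
  refine hlim.congr' (eventually_atTop.2 ⟨1, fun n hn => ?_⟩)
  have hn : (n : ℝ) ≠ 0 := by positivity
  have htel := birkhoffSum_shift_add_birkhoffSum_rplus f V n z
  simp only [birkhoffAverage, smul_eq_mul, err]
  field_simp
  linarith

end Calibrated

theorem support_point_is_accumulation_point_of_orbit_general
    [MetricSpace M] [CompactSpace M] [MeasurableSpace M] [BorelSpace M]
    (hdiam : ∀ a b : M, dist a b ≤ 1)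
    (θ : ℝ) (hθ : θ ∈ Set.Ioo (0 : ℝ) 1)
    (f V : (ℕ → M) → ℝ) (hf : IsHolder θ f)
    (μinf : Measure (ℕ → M))
    (huniq : ∀ μ' : Measure (ℕ → M), IsMaximizing f μ' → μ' = μinf)
    (hV : IsCalibrated f V)
    (z : ℕ → M) (hz : RplusInf f V z ≠ ⊤) :
    ∀ p : ℕ → M, (∀ U : Set (ℕ → M), IsOpen U → p ∈ U → 0 < μinf U) →
      MapClusterPt p atTop (fun n : ℕ => shift^[n] z) := by
  have hθ' : |θ| < 1 := (abs_of_pos hθ.1).trans_lt hθ.2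
  let F : (ℕ → M) →ᵇ ℝ := .mkOfCompact ⟨f, hf.continuous hθ' hdiam⟩
  obtain ⟨ν, hν⟩ := exists_clusterPt_of_compactSpace (map (empiricalMeasure shift z) atTop)
  have hmax : IsMaximizing f ν :=
    ⟨⟨inferInstance, map_eq_of_mapClusterPt_empiricalMeasure continuous_shift hν⟩,
      integral_eq_of_mapClusterPt_empiricalMeasure hν F (hV.tendsto_birkhoffAverage hz)⟩
  intro p hp
  exact mapClusterPt_orbit_of_mapClusterPt_empiricalMeasure hν (huniq ν hmax ▸ hp)

theorem support_point_is_accumulation_point_of_orbit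
    [MetricSpace M] [CompactSpace M] [ConnectedSpace M] [MeasurableSpace M] [BorelSpace M]
    (hdiam : ∀ a b : M, dist a b ≤ 1)
    (θ : ℝ) (hθ : θ ∈ Set.Ioo (0 : ℝ) 1)
    (f V : (ℕ → M) → ℝ) (hf : IsHolder θ f)
    (μinf : Measure (ℕ → M)) (hmax : IsMaximizing f μinf)
    (huniq : ∀ μ' : Measure (ℕ → M), IsMaximizing f μ' → μ' = μinf)
    (hV : IsCalibrated f V)
    (z : ℕ → M) (hz : RplusInf f V z ≠ ⊤) :
    ∀ p : ℕ → M, (∀ U : Set (ℕ → M), IsOpen U → p ∈ U → 0 < μinf U) →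
      MapClusterPt p atTop (fun n : ℕ => shift^[n] z) :=
  support_point_is_accumulation_point_of_orbit_general hdiam θ hθ f V hf μinf huniq hV z hz

end GXY
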